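/- Jet lemma for holomorphic deformations (abstract form of the flow lemma): Let n ≥ 1 and k ≥ 0 be integers. Let W ⊆ ℂ × ℂ^n be an open set containing {0} × ℂ^n and let φ : W → ℂ^n be holomorphic (complex analytic) with φ(0, z) = z for all z ∈ ℂ^n. Let U ⊆ ℂ be open, let f : U → ℂ^n and h : U → ℂ be holomorphic, let p ∈ U, and suppose that h has a zero of multiplicity at least k + 1 at p. Then there is an open neighborhood U′ ⊆ U of p such that (h(q), f(q)) ∈ W for all q ∈ U′, and the holomorphic map f̃ : U′ → ℂ^n defined by f̃(q) = φ(h(q), f(q)) satisfies: f̃ − f has a zero of multiplicity at least k + 1 at p (i.e. f̃ and f have the same k-jet at p). -/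

import Mathlib

open Set Metric

noncomputable section

/-- `Λ` is a closed discrete subset of `U`: it is contained in `U`, closed in the
subspace topology of `U`, and every point of `Λ` is isolated in `Λ`. -/
def ClosedDiscreteIn (Λ U : Set ℂ) : Prop :=
  Λ ⊆ U ∧ closure Λ ∩ U ⊆ Λ ∧ ∀ p ∈ Λ, ∃ V : Set ℂ, IsOpen V ∧ p ∈ V ∧ V ∩ Λ = {p}

/-- Partial derivative of `X` with respect to the real coordinate `x` (direction `1`). -/
def Xx (n : ℕ) (X : ℂ → EuclideanSpace ℝ (Fin n)) (z : ℂ) : EuclideanSpace ℝ (Fin n) :=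
  fderiv ℝ X z 1

/-- Partial derivative of `X` with respect to the real coordinate `y` (direction `i`). -/
def Xy (n : ℕ) (X : ℂ → EuclideanSpace ℝ (Fin n)) (z : ℂ) : EuclideanSpace ℝ (Fin n) :=
  fderiv ℝ X z Complex.I

/-- `X : U → ℝⁿ` is a conformal minimal immersion: it is smooth on `U`,
`‖X_x‖ = ‖X_y‖ ≠ 0`, `⟨X_x, X_y⟩ = 0`, and `X` is harmonic (`X_xx + X_yy = 0`) on `U`. -/
def IsConformalMinimalOn (n : ℕ) (X : ℂ → EuclideanSpace ℝ (Fin n)) (U : Set ℂ) : Prop :=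
  ContDiffOn ℝ ⊤ X U ∧
  (∀ z ∈ U, ‖Xx n X z‖ = ‖Xy n X z‖ ∧ Xx n X z ≠ 0 ∧
    (inner ℝ (Xx n X z) (Xy n X z) : ℝ) = 0) ∧
  (∀ z ∈ U, fderiv ℝ (Xx n X) z 1 + fderiv ℝ (Xy n X) z Complex.I = 0)

/-- `∂X = (X_x - i X_y)/2`, componentwise, with values in `ℂⁿ`. -/
def partialCM (n : ℕ) (X : ℂ → EuclideanSpace ℝ (Fin n)) (z : ℂ) : Fin n → ℂ :=
  fun j => ((Xx n X z j : ℂ) - Complex.I * (Xy n X z j : ℂ)) / 2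

/-- `g` has a zero of multiplicity at least `k` at `p`: near `p`,
`g z = (z - p)^k • h z` with `h` holomorphic. -/
def ZeroOfMultAtLeast {E : Type*} [NormedAddCommGroup E] [NormedSpace ℂ E]
    (g : ℂ → E) (p : ℂ) (k : ℕ) : Prop :=
  ∃ (V : Set ℂ) (h : ℂ → E), IsOpen V ∧ p ∈ V ∧ DifferentiableOn ℂ h V ∧
    ∀ z ∈ V, g z = (z - p) ^ k • h z

/-- `F` is a complete immersed map on `U`: for every continuous proper path
`γ : [0,1) → U` the total variation of `F ∘ γ` is infinite. -/
def IsCompleteMap {E : Type*} [NormedAddCommGroup E] (F : ℂ → E) (U : Set ℂ) : Prop :=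
  ∀ γ : ℝ → ℂ, ContinuousOn γ (Set.Ico 0 1) → (∀ t ∈ Set.Ico (0:ℝ) 1, γ t ∈ U) →
    (∀ C : Set ℂ, C ⊆ U → IsCompact C →
      ∃ t₀ ∈ Set.Ico (0:ℝ) 1, ∀ t ∈ Set.Ico (0:ℝ) 1, t₀ ≤ t → γ t ∉ C) →
    eVariationOn (F ∘ γ) (Set.Ico 0 1) = ⊤

/-- The null quadric `𝔄 = {z ∈ ℂⁿ : z₁² + ⋯ + zₙ² = 0}`. -/
def nullQuadric (n : ℕ) : Set (Fin n → ℂ) := {z | ∑ j, (z j) ^ 2 = 0}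

/-- The punctured null quadric `𝔄∗ = 𝔄 ∖ {0}`. -/
def nullQuadricStar (n : ℕ) : Set (Fin n → ℂ) := nullQuadric n \ {0}

/-- `F : U → ℂⁿ` is a null holomorphic curve: holomorphic with `F'(z) ∈ 𝔄∗` on `U`. -/
def IsNullCurveOn (n : ℕ) (F : ℂ → Fin n → ℂ) (U : Set ℂ) : Prop :=
  DifferentiableOn ℂ F U ∧ ∀ z ∈ U, deriv F z ∈ nullQuadricStar n

/-- `f` is flat on `s`: all values of `f` on `s` lie on a single complex line `ℂ·z₀`. -/
def FlatOn {α : Type*} (n : ℕ) (f : α → Fin n → ℂ) (s : Set α) : Prop :=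
  ∃ z₀ : Fin n → ℂ, ∀ q ∈ s, ∃ ζ : ℂ, f q = ζ • z₀

/-!
`Φ (t, z) = φ (t, z) - z` vanishes on `t = 0`, so the Schwarz lemma in `t` gives
`‖Φ (t, z)‖ ≤ C ‖t‖` uniformly for `(t, z)` near `(0, f p)`. Hence `φ (h q, f q) - f q`
is `O(‖h q‖) = O(‖q - p‖ ^ (k + 1))`, and for a holomorphic function of one variable
such a bound forces a zero of multiplicity at least `k + 1`.
-/

open Filter Asymptotics Topology

section AnalyticOrder

variable {𝕜 E : Type*} [NontriviallyNormedField 𝕜] [NormedAddCommGroup E] [NormedSpace 𝕜 E]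
  {f : 𝕜 → E} {z₀ : 𝕜} {n : ℕ}

theorem natCast_le_analyticOrderAt_of_isBigO (hf : AnalyticAt 𝕜 f z₀)
    (hO : f =O[𝓝 z₀] fun z => (z - z₀) ^ n) : (n : ℕ∞) ≤ analyticOrderAt f z₀ := by
  by_contra! hlt
  lift analyticOrderAt f z₀ to ℕ using hlt.ne_top with m hm
  obtain ⟨g, hg, hg0, hfg⟩ := hf.analyticOrderAt_eq_natCast.1 hm.symm
  have hmn : m < n := by exact_mod_cast hlt
  have hgO : g =O[𝓝[≠] z₀] fun z => (z - z₀) ^ (n - m) := by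
    refine ((isBigO_refl (fun z => ((z - z₀) ^ m)⁻¹) _).smul
      (hO.mono nhdsWithin_le_nhds)).congr' ?_ ?_
    · filter_upwards [self_mem_nhdsWithin, hfg.filter_mono nhdsWithin_le_nhds] with z hz hfz
      rw [hfz, smul_smul, inv_mul_cancel₀ (pow_ne_zero _ (sub_ne_zero.2 hz)), one_smul]
    · filter_upwards [self_mem_nhdsWithin] with z hz
      rw [smul_eq_mul, pow_sub₀ _ (sub_ne_zero.2 hz) hmn.le, mul_comm]
  have hpow : Tendsto (fun z => (z - z₀) ^ (n - m)) (𝓝[≠] z₀) (𝓝 0) :=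
    (((continuous_id.sub continuous_const).pow _).tendsto' z₀ 0
      (by simp [Nat.sub_ne_zero_of_lt hmn])).mono_left nhdsWithin_le_nhds
  exact hg0 (tendsto_nhds_unique hg.continuousAt.continuousWithinAt (hgO.trans_tendsto hpow))

end AnalyticOrder

section ZeroOfMultAtLeast

variable {E : Type*} [NormedAddCommGroup E] [NormedSpace ℂ E] {g : ℂ → E} {p : ℂ} {k : ℕ}

theorem ZeroOfMultAtLeast.apply_eq_zero (hg : ZeroOfMultAtLeast g p k) (hk : k ≠ 0) :
    g p = 0 := by
  obtain ⟨V, η, -, hpV, -, hgη⟩ := hg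
  simp [hgη p hpV, hk]

theorem ZeroOfMultAtLeast.isBigO (hg : ZeroOfMultAtLeast g p k) :
    g =O[𝓝 p] fun z => (z - p) ^ k := by
  obtain ⟨V, η, hV, hpV, hη, hgη⟩ := hg
  have hηO : η =O[𝓝 p] fun _ => (1 : ℂ) :=
    (hη.differentiableAt (hV.mem_nhds hpV)).continuousAt.tendsto.isBigO_one ℂ
  refine ((isBigO_refl (fun z => (z - p) ^ k) _).smul hηO).congr'
    (eventually_of_mem (hV.mem_nhds hpV) fun z hz => (hgη z hz).symm) (.of_forall fun z => ?_)
  simp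

theorem zeroOfMultAtLeast_of_isBigO [CompleteSpace E] (hg : AnalyticAt ℂ g p)
    (hO : g =O[𝓝 p] fun z => (z - p) ^ k) : ZeroOfMultAtLeast g p k := by
  obtain ⟨η, hη, hgη⟩ :=
    (natCast_le_analyticOrderAt hg).1 (natCast_le_analyticOrderAt_of_isBigO hg hO)
  obtain ⟨V, hVsub, hV, hpV⟩ := _root_.mem_nhds_iff.1 (hη.eventually_analyticAt.and hgη)
  exact ⟨V, η, hV, hpV, fun z hz => (hVsub hz).1.differentiableAt.differentiableWithinAt,
    fun z hz => (hVsub hz).2⟩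

end ZeroOfMultAtLeast

/-- The Schwarz lemma applied to `t ↦ Φ (t, z)` on a small ball where `‖Φ‖ < 1` gives
`‖Φ (t, z)‖ ≤ ‖t‖ / r` with `r` independent of `z`. -/
theorem isBigO_fst_of_apply_zero_eq_zero {E F : Type*} [NormedAddCommGroup E] [NormedSpace ℂ E]
    [NormedAddCommGroup F] [NormedSpace ℂ F] {Φ : ℂ × E → F} {z₀ : E}
    (hΦ : ∀ᶠ w in 𝓝 ((0 : ℂ), z₀), DifferentiableAt ℂ Φ w)
    (hΦ0 : ∀ᶠ z in 𝓝 z₀, Φ (0, z) = 0) : Φ =O[𝓝 ((0 : ℂ), z₀)] Prod.fst := by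
  have hlim : Tendsto Φ (𝓝 (0, z₀)) (𝓝 0) := by
    simpa [hΦ0.self_of_nhds] using hΦ.self_of_nhds.continuousAt.tendsto
  obtain ⟨r, hr, hball⟩ := Metric.eventually_nhds_iff_ball.1
    (hΦ.and ((hlim.eventually_mem (ball_mem_nhds 0 one_pos)).and
      ((continuous_snd.tendsto _).eventually hΦ0)))
  refine IsBigO.of_bound r⁻¹ ?_
  filter_upwards [ball_mem_nhds _ hr] with ⟨t, z⟩ htz
  rw [← ball_prod_same] at htz
  have hslice : ∀ s ∈ ball (0 : ℂ) r, DifferentiableAt ℂ Φ (s, z) ∧ ‖Φ (s, z)‖ < 1 ∧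
      Φ (0, z) = 0 := fun s hs => by
    simpa [← ball_prod_same] using hball (s, z) (by rw [← ball_prod_same]; exact ⟨hs, htz.2⟩)
  have hzero := (hslice 0 (mem_ball_self hr)).2.2
  have := Complex.dist_le_div_mul_dist_of_mapsTo_ball (f := fun s => Φ (s, z)) (R₂ := 1)
    (fun s hs => ((hslice s hs).1.comp s
      (differentiableAt_id.prodMk (differentiableAt_const z))).differentiableWithinAt)
    (fun s hs => by simpa [hzero] using (hslice s hs).2.1.le) htz.1
  simpa [hzero, div_eq_inv_mul] using this

theorem jet_lemma_holomorphic_deformation_general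
    (n k : ℕ)
    (W : Set (ℂ × (Fin n → ℂ))) (hWopen : IsOpen W)
    (hW0 : ∀ z : Fin n → ℂ, ((0 : ℂ), z) ∈ W)
    (φ : ℂ × (Fin n → ℂ) → Fin n → ℂ) (hφ : DifferentiableOn ℂ φ W)
    (hφ0 : ∀ z : Fin n → ℂ, φ (0, z) = z)
    (U : Set ℂ) (hU : IsOpen U)
    (f : ℂ → Fin n → ℂ) (hf : DifferentiableOn ℂ f U)
    (h : ℂ → ℂ) (hh : DifferentiableOn ℂ h U)
    (p : ℂ) (hp : p ∈ U)
    (hz : ZeroOfMultAtLeast h p (k + 1)) :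
    ∃ U' : Set ℂ, IsOpen U' ∧ p ∈ U' ∧ U' ⊆ U ∧
      (∀ q ∈ U', (h q, f q) ∈ W) ∧
      ZeroOfMultAtLeast (fun q => φ (h q, f q) - f q) p (k + 1) := by
  have hhp : h p = 0 := hz.apply_eq_zero k.succ_ne_zero
  have hF : DifferentiableOn ℂ (fun q => (h q, f q)) U := hh.prodMk hf
  set U' := U ∩ (fun q => (h q, f q)) ⁻¹' W
  have hU' : IsOpen U' := hF.continuousOn.isOpen_inter_preimage hU hWopen
  have hpU' : p ∈ U' := ⟨hp, by simpa [hhp] using hW0 (f p)⟩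
  refine ⟨U', hU', hpU', inter_subset_left, fun q hq => hq.2, zeroOfMultAtLeast_of_isBigO ?_ ?_⟩
  · exact ((hφ.comp (hF.mono inter_subset_left) fun q hq => hq.2).sub
      (hf.mono inter_subset_left)).analyticAt (hU'.mem_nhds hpU')
  have hΦ : (fun w => φ w - w.2) =O[𝓝 ((0 : ℂ), f p)] Prod.fst :=
    isBigO_fst_of_apply_zero_eq_zero
      (eventually_of_mem (hWopen.mem_nhds (hW0 (f p))) fun w hw =>
        ((hφ w hw).differentiableAt (hWopen.mem_nhds hw)).sub differentiableAt_snd)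
      (.of_forall fun z => by simp [hφ0])
  have hFp : Tendsto (fun q => (h q, f q)) (𝓝 p) (𝓝 (0, f p)) := by
    simpa [hhp] using (hF.continuousOn.continuousAt (hU.mem_nhds hp)).tendsto
  exact (hΦ.comp_tendsto hFp).trans hz.isBigO

/-- Jet lemma for holomorphic deformations (abstract form of the
flow lemma). -/
theorem jet_lemma_holomorphic_deformation
    (n k : ℕ) (hn : 1 ≤ n)
    (W : Set (ℂ × (Fin n → ℂ))) (hWopen : IsOpen W)
    (hW0 : ∀ z : Fin n → ℂ, ((0 : ℂ), z) ∈ W)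
    (φ : ℂ × (Fin n → ℂ) → Fin n → ℂ) (hφ : DifferentiableOn ℂ φ W)
    (hφ0 : ∀ z : Fin n → ℂ, φ (0, z) = z)
    (U : Set ℂ) (hU : IsOpen U)
    (f : ℂ → Fin n → ℂ) (hf : DifferentiableOn ℂ f U)
    (h : ℂ → ℂ) (hh : DifferentiableOn ℂ h U)
    (p : ℂ) (hp : p ∈ U)
    (hz : ZeroOfMultAtLeast h p (k + 1)) :
    ∃ U' : Set ℂ, IsOpen U' ∧ p ∈ U' ∧ U' ⊆ U ∧
      (∀ q ∈ U', (h q, f q) ∈ W) ∧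
      ZeroOfMultAtLeast (fun q => φ (h q, f q) - f q) p (k + 1) :=
  jet_lemma_holomorphic_deformation_general n k W hWopen hW0 φ hφ hφ0 U hU f hf h hh p hp hz
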